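/- arXiv:1804.10429 — 4 statements merged into one kernel-verified Lean document; each statement's English description precedes it below -/
import Mathlib

section
/- For every real α ≥ 2, the map F : ℂ → ℂ defined by F(z) = |z|^{α-1} z is differentiable over ℝ at every point (ℂ being viewed as a two-dimensional real normed space), and there exists a constant C ≥ 0 depending only on α such that for all u, v ∈ ℂ: (i) the real Fréchet derivative satisfies ‖D F(u)‖ ≤ C |u|^{α-1} in operator norm, and (ii) ‖D F(u+v) − D F(u)‖ ≤ C (|u|^{α-2} + |v|^{α-2}) |v| in operator norm. -/
/-!
With `p = α - 1` and `û = u / ‖u‖`, the derivative of `z ↦ ‖z‖ ^ p • z` is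
`DF(u) = ‖u‖ ^ p • (id + p • ⟪û, ·⟫ û)`. The difference `DF(w) - DF(u)` splits into
`(‖w‖ ^ p - ‖u‖ ^ p) • (id + p • ⟪ŵ, ·⟫ ŵ)`, bounded by the scalar mean value theorem, and
`‖u‖ ^ p • p • (⟪ŵ, ·⟫ ŵ - ⟪û, ·⟫ û)`, bounded using `‖ŵ - û‖ ≤ 2 ‖w - u‖ / ‖u‖`.
Together they give `‖DF(w) - DF(u)‖ ≤ p (p + 5) (‖w‖ ^ (p - 1) + ‖u‖ ^ (p - 1)) ‖w - u‖`, and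
`‖u + v‖ ^ (p - 1) ≤ 2 ^ (p - 1) (‖u‖ ^ (p - 1) + ‖v‖ ^ (p - 1))` turns this into the claim.
-/

open Real Asymptotics Topology Filter InnerProductSpace NormedSpace

lemma rpow_le_rpow_add_rpow_of_le_max {q t a b : ℝ} (hq : 0 ≤ q) (ht : 0 ≤ t) (ha : 0 ≤ a)
    (hb : 0 ≤ b) (h : t ≤ max a b) : t ^ q ≤ a ^ q + b ^ q := by
  rcases le_total a b with hab | hab
  · rw [max_eq_right hab] at h
    linarith [rpow_le_rpow ht h hq, rpow_nonneg ha q]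
  · rw [max_eq_left hab] at h
    linarith [rpow_le_rpow ht h hq, rpow_nonneg hb q]

lemma abs_rpow_sub_rpow_le {p a b : ℝ} (hp : 1 ≤ p) (ha : 0 ≤ a) (hb : 0 ≤ b) :
    |a ^ p - b ^ p| ≤ p * (a ^ (p - 1) + b ^ (p - 1)) * |a - b| := by
  have hderiv : ∀ t ∈ Set.uIcc b a,
      HasDerivWithinAt (fun t : ℝ => t ^ p) (p * t ^ (p - 1)) (Set.uIcc b a) t :=
    fun t _ => (hasDerivAt_rpow_const (Or.inr hp)).hasDerivWithinAt
  have hbound : ∀ t ∈ Set.uIcc b a, ‖p * t ^ (p - 1)‖ ≤ p * (a ^ (p - 1) + b ^ (p - 1)) := by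
    intro t ht
    have ht0 : 0 ≤ t := le_trans (le_min hb ha) ht.1
    rw [norm_mul, norm_of_nonneg (by linarith), norm_of_nonneg (rpow_nonneg ht0 _)]
    exact mul_le_mul_of_nonneg_left (rpow_le_rpow_add_rpow_of_le_max (by linarith) ht0 ha hb
      (ht.2.trans (max_comm b a).le)) (by linarith)
  simpa [← norm_eq_abs] using Convex.norm_image_sub_le_of_norm_hasDerivWithin_le hderiv hbound
    (convex_uIcc b a) Set.left_mem_uIcc Set.right_mem_uIcc

lemma norm_add_rpow_le {E : Type*} [SeminormedAddCommGroup E] {q : ℝ} (hq : 0 ≤ q) (u v : E) :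
    ‖u + v‖ ^ q ≤ 2 ^ q * (‖u‖ ^ q + ‖v‖ ^ q) := by
  have h : ‖u + v‖ ≤ max (2 * ‖u‖) (2 * ‖v‖) := by
    rw [← mul_max_of_nonneg _ _ zero_le_two]
    linarith [norm_add_le u v, le_max_left ‖u‖ ‖v‖, le_max_right ‖u‖ ‖v‖]
  calc ‖u + v‖ ^ q ≤ (2 * ‖u‖) ^ q + (2 * ‖v‖) ^ q :=
        rpow_le_rpow_add_rpow_of_le_max hq (norm_nonneg _) (by positivity) (by positivity) h
    _ = 2 ^ q * (‖u‖ ^ q + ‖v‖ ^ q) := by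
        rw [mul_rpow zero_le_two (norm_nonneg u), mul_rpow zero_le_two (norm_nonneg v)]
        ring

section NormedSpace

variable {V : Type*} [NormedAddCommGroup V] [NormedSpace ℝ V]

lemma norm_normalize_le (x : V) : ‖normalize x‖ ≤ 1 := by
  by_cases hx : x = 0
  · simp [hx]
  · exact (norm_normalize hx).le

lemma norm_normalize_sub_normalize_le {u : V} (hu : u ≠ 0) (w : V) :
    ‖normalize w - normalize u‖ ≤ 2 * ‖w - u‖ / ‖u‖ := by
  have hu' : 0 < ‖u‖ := norm_pos_iff.mpr hu
  have key : normalize w - normalize u =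
      (‖u‖⁻¹ * (‖u‖ - ‖w‖)) • normalize w + ‖u‖⁻¹ • (w - u) := by
    rw [mul_smul, smul_sub, sub_smul, norm_smul_normalize, NormedSpace.normalize,
      NormedSpace.normalize, smul_sub, smul_smul, inv_mul_cancel₀ hu'.ne', one_smul]
    abel
  calc ‖normalize w - normalize u‖
      ≤ ‖u‖⁻¹ * |‖u‖ - ‖w‖| * ‖normalize w‖ + ‖u‖⁻¹ * ‖w - u‖ := by
        rw [key]
        refine (norm_add_le _ _).trans_eq ?_
        rw [norm_smul, norm_smul, norm_mul, norm_inv, norm_norm, norm_eq_abs (‖u‖ - ‖w‖)]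
    _ ≤ ‖u‖⁻¹ * ‖w - u‖ * 1 + ‖u‖⁻¹ * ‖w - u‖ := by
        gcongr
        · rw [abs_sub_comm]; exact abs_norm_sub_norm_le w u
        · exact norm_normalize_le w
    _ = 2 * ‖w - u‖ / ‖u‖ := by field_simp; ring

lemma rpow_mul_norm_normalize_sub_le {p : ℝ} (hp : 0 < p) (u w : V) :
    ‖u‖ ^ p * ‖normalize w - normalize u‖ ≤ 2 * ‖u‖ ^ (p - 1) * ‖w - u‖ := by
  rcases eq_or_ne u 0 with rfl | hu
  · rw [norm_zero, zero_rpow hp.ne', zero_mul]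
    positivity
  · calc ‖u‖ ^ p * ‖normalize w - normalize u‖ ≤ ‖u‖ ^ p * (2 * ‖w - u‖ / ‖u‖) := by
          gcongr; exact norm_normalize_sub_normalize_le hu w
      _ = 2 * ‖u‖ ^ (p - 1) * ‖w - u‖ := by
          rw [rpow_sub_one (norm_ne_zero_iff.mpr hu)]; ring

lemma hasFDerivAt_norm_rpow_smul_zero {p : ℝ} (hp : 0 < p) :
    HasFDerivAt (fun z : V => ‖z‖ ^ p • z) (0 : V →L[ℝ] V) 0 := by
  refine .of_isLittleO ?_
  have hlim : Tendsto (fun z : V => ‖z‖ ^ p) (𝓝 0) (𝓝 0) := by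
    simpa [zero_rpow hp.ne'] using
      (continuous_norm.rpow_const fun _ => Or.inr hp.le).tendsto (0 : V)
  simpa using ((isLittleO_one_iff ℝ).2 hlim).smul_isBigO (isBigO_refl (fun z : V => z) _)

end NormedSpace

lemma norm_rankOne_self_sub_le {𝕜 F : Type*} [RCLike 𝕜] [NormedAddCommGroup F]
    [InnerProductSpace 𝕜 F] (x y : F) :
    ‖rankOne 𝕜 x x - rankOne 𝕜 y y‖ ≤ (‖x‖ + ‖y‖) * ‖x - y‖ := by
  have h : rankOne 𝕜 x x - rankOne 𝕜 y y = rankOne 𝕜 (x - y) x + rankOne 𝕜 y (x - y) := by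
    simp only [map_sub, sub_apply]; abel
  rw [h]
  refine (norm_add_le _ _).trans ?_
  simp only [norm_rankOne]
  linarith [mul_comm ‖x - y‖ ‖x‖]

variable {E : Type*} [NormedAddCommGroup E] [InnerProductSpace ℝ E]

lemma hasFDerivAt_norm_rpow_of_ne_zero {u : E} (hu : u ≠ 0) (p : ℝ) :
    HasFDerivAt (fun z : E => ‖z‖ ^ p) ((p * ‖u‖ ^ (p - 2)) • innerSL ℝ u) u := by
  convert ((hasStrictFDerivAt_norm_sq u).rpow_const (p := p / 2) (by simp [hu])).hasFDerivAt
    using 1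
  · ext z
    simp only [← rpow_natCast_mul (norm_nonneg _)]
    ring_nf
  · simp_rw [← rpow_natCast_mul (norm_nonneg _), ← Nat.cast_smul_eq_nsmul ℝ, smul_smul]
    ring_nf

/-- Written with `normalize u` so that the formula is also right at `u = 0`. -/
noncomputable def normRpowSmulDeriv (p : ℝ) (u : E) : E →L[ℝ] E :=
  ‖u‖ ^ p • (ContinuousLinearMap.id ℝ E + p • rankOne ℝ (normalize u) (normalize u))

lemma hasFDerivAt_norm_rpow_smul {p : ℝ} (hp : 0 < p) (u : E) :
    HasFDerivAt (fun z : E => ‖z‖ ^ p • z) (normRpowSmulDeriv p u) u := by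
  rcases eq_or_ne u 0 with rfl | hu
  · simpa [normRpowSmulDeriv, zero_rpow hp.ne'] using hasFDerivAt_norm_rpow_smul_zero hp
  refine ((hasFDerivAt_norm_rpow_of_ne_zero hu p).smul (hasFDerivAt_id u)).congr_fderiv ?_
  ext h
  simp only [normRpowSmulDeriv, NormedSpace.normalize, ContinuousLinearMap.smulRight_apply,
    smul_apply, add_apply, ContinuousLinearMap.id_apply, coe_innerSL_apply, rankOne_apply,
    inner_smul_left, smul_eq_mul, smul_add, smul_smul, id_eq, conj_trivial]
  congr 2
  rw [rpow_sub (norm_pos_iff.mpr hu), rpow_two]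
  field_simp

lemma norm_id_add_smul_rankOne_self_le {p : ℝ} (hp : 0 ≤ p) {x : E} (hx : ‖x‖ ≤ 1) :
    ‖ContinuousLinearMap.id ℝ E + p • rankOne ℝ x x‖ ≤ 1 + p := by
  refine (norm_add_le _ _).trans (add_le_add ContinuousLinearMap.norm_id_le ?_)
  rw [norm_smul, norm_rankOne, norm_of_nonneg hp]
  exact mul_le_of_le_one_right hp (mul_le_one₀ hx (norm_nonneg x) hx)

lemma norm_normRpowSmulDeriv_le {p : ℝ} (hp : 0 ≤ p) (u : E) :
    ‖normRpowSmulDeriv p u‖ ≤ (1 + p) * ‖u‖ ^ p := by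
  rw [normRpowSmulDeriv, norm_smul, norm_of_nonneg (rpow_nonneg (norm_nonneg u) p), mul_comm]
  gcongr
  exact norm_id_add_smul_rankOne_self_le hp (norm_normalize_le u)

lemma norm_normRpowSmulDeriv_sub_le {p : ℝ} (hp : 1 ≤ p) (w u : E) :
    ‖normRpowSmulDeriv p w - normRpowSmulDeriv p u‖ ≤
      p * (p + 5) * (‖w‖ ^ (p - 1) + ‖u‖ ^ (p - 1)) * ‖w - u‖ := by
  set A : E → E →L[ℝ] E := fun x => ContinuousLinearMap.id ℝ E + p • rankOne ℝ x x
  have hsplit : normRpowSmulDeriv p w - normRpowSmulDeriv p u =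
      (‖w‖ ^ p - ‖u‖ ^ p) • A (normalize w) +
        ‖u‖ ^ p • (p • (rankOne ℝ (normalize w) (normalize w) -
          rankOne ℝ (normalize u) (normalize u))) := by
    simp only [normRpowSmulDeriv, A]
    module
  have hscalar : |‖w‖ ^ p - ‖u‖ ^ p| ≤ p * (‖w‖ ^ (p - 1) + ‖u‖ ^ (p - 1)) * ‖w - u‖ :=
    (abs_rpow_sub_rpow_le hp (norm_nonneg w) (norm_nonneg u)).trans
      (by gcongr; exact abs_norm_sub_norm_le w u)
  have hrankOne : ‖rankOne ℝ (normalize w) (normalize w) - rankOne ℝ (normalize u) (normalize u)‖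
      ≤ 2 * ‖normalize w - normalize u‖ :=
    (norm_rankOne_self_sub_le _ _).trans
      (by gcongr; linarith [norm_normalize_le w, norm_normalize_le u])
  have hunit : ‖u‖ ^ p * ‖normalize w - normalize u‖ ≤ 2 * ‖u‖ ^ (p - 1) * ‖w - u‖ :=
    rpow_mul_norm_normalize_sub_le (by linarith) u w
  have hA : ‖A (normalize w)‖ ≤ 1 + p :=
    norm_id_add_smul_rankOne_self_le (by linarith) (norm_normalize_le w)
  have hw_nonneg : 0 ≤ ‖w‖ ^ (p - 1) * ‖w - u‖ := by positivity
  rw [hsplit]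
  calc _ ≤ |‖w‖ ^ p - ‖u‖ ^ p| * ‖A (normalize w)‖ + p * (‖u‖ ^ p *
          ‖rankOne ℝ (normalize w) (normalize w) - rankOne ℝ (normalize u) (normalize u)‖) := by
        refine (norm_add_le _ _).trans_eq ?_
        rw [norm_smul, norm_smul, norm_smul, norm_eq_abs, norm_of_nonneg (by positivity),
          norm_of_nonneg (by linarith)]
        ring
    _ ≤ p * (‖w‖ ^ (p - 1) + ‖u‖ ^ (p - 1)) * ‖w - u‖ * (1 + p) +
          p * (2 * (2 * ‖u‖ ^ (p - 1) * ‖w - u‖)) := by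
        gcongr ?_ * ?_ + p * ?_
        · calc _ ≤ ‖u‖ ^ p * (2 * ‖normalize w - normalize u‖) := by gcongr
            _ ≤ 2 * (2 * ‖u‖ ^ (p - 1) * ‖w - u‖) := by linarith
    _ ≤ p * (p + 5) * (‖w‖ ^ (p - 1) + ‖u‖ ^ (p - 1)) * ‖w - u‖ := by
        nlinarith

lemma norm_normRpowSmulDeriv_add_sub_le {p : ℝ} (hp : 1 ≤ p) (u v : E) :
    ‖normRpowSmulDeriv p (u + v) - normRpowSmulDeriv p u‖ ≤
      p * (p + 5) * (2 ^ (p - 1) + 1) * (‖u‖ ^ (p - 1) + ‖v‖ ^ (p - 1)) * ‖v‖ := by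
  have hlip := norm_normRpowSmulDeriv_sub_le hp (u + v) u
  rw [add_sub_cancel_left] at hlip
  have hsum : ‖u + v‖ ^ (p - 1) + ‖u‖ ^ (p - 1) ≤
      (2 ^ (p - 1) + 1) * (‖u‖ ^ (p - 1) + ‖v‖ ^ (p - 1)) := by
    have := norm_add_rpow_le (sub_nonneg.mpr hp) u v
    have : 0 ≤ ‖v‖ ^ (p - 1) := by positivity
    linarith
  calc _ ≤ p * (p + 5) * (‖u + v‖ ^ (p - 1) + ‖u‖ ^ (p - 1)) * ‖v‖ := hlip
    _ ≤ _ := by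
      rw [mul_assoc (p * (p + 5)) (2 ^ (p - 1) + 1)]
      gcongr

/-- For real `α ≥ 2`, the map `F : ℂ → ℂ`, `F z = |z|^{α-1} z`, is differentiable over `ℝ`,
and there is `C ≥ 0` (depending only on `α`) such that `‖DF(u)‖ ≤ C|u|^{α-1}` and
`‖DF(u+v) − DF(u)‖ ≤ C(|u|^{α-2} + |v|^{α-2})|v|` in operator norm. -/
theorem stmt_1 (α : ℝ) (hα : 2 ≤ α) :
    Differentiable ℝ (fun z : ℂ => (‖z‖ ^ (α - 1) : ℝ) • z) ∧
    ∃ C : ℝ, 0 ≤ C ∧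
      (∀ u : ℂ, ‖fderiv ℝ (fun z : ℂ => (‖z‖ ^ (α - 1) : ℝ) • z) u‖
          ≤ C * ‖u‖ ^ (α - 1)) ∧
      (∀ u v : ℂ,
        ‖fderiv ℝ (fun z : ℂ => (‖z‖ ^ (α - 1) : ℝ) • z) (u + v)
            - fderiv ℝ (fun z : ℂ => (‖z‖ ^ (α - 1) : ℝ) • z) u‖
          ≤ C * (‖u‖ ^ (α - 2) + ‖v‖ ^ (α - 2)) * ‖v‖) := by
  rw [show α - 2 = α - 1 - 1 by ring]
  set p := α - 1
  have hp : 1 ≤ p := by linarith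
  have hF (u : ℂ) : HasFDerivAt (fun z : ℂ => ‖z‖ ^ p • z) (normRpowSmulDeriv p u) u :=
    hasFDerivAt_norm_rpow_smul (by linarith) u
  simp only [fun u => (hF u).fderiv]
  refine ⟨fun u => (hF u).differentiableAt, max (1 + p) (p * (p + 5) * (2 ^ (p - 1) + 1)),
    by positivity, fun u => ?_, fun u v => ?_⟩
  · exact (norm_normRpowSmulDeriv_le (by linarith) u).trans (by gcongr; exact le_max_left _ _)
  · refine (norm_normRpowSmulDeriv_add_sub_le hp u v).trans ?_
    gcongr
    exact le_max_right _ _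
end

section
/- Let d ≥ 3 be an integer, α(d) := (2 − d + √(d² + 12d + 4))/(2d), and let α be a real number with 1 + α(d) < α < 1 + 4/(d−2). Set q̃ := 2(α²−1)/(4 − (α−1)(d−2)). Then q̃ > 0 and d(α−1)·q̃/(2(α+1)) = d(α−1)²/(4 − (α−1)(d−2)) > 1. -/
/-- For `d ≥ 3`, Strauss exponent `α(d)`, and `1 + α(d) < α < 1 + 4/(d−2)`, the exponent
`q̃ = 2(α²−1)/(4 − (α−1)(d−2))` is positive and
`d(α−1)q̃/(2(α+1)) = d(α−1)²/(4 − (α−1)(d−2)) > 1`. -/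
theorem stmt_5 (d : ℕ) (hd : 3 ≤ d) (a α q : ℝ)
    (ha : a = (2 - (d : ℝ) + Real.sqrt ((d : ℝ) ^ 2 + 12 * (d : ℝ) + 4)) / (2 * (d : ℝ)))
    (hα1 : 1 + a < α) (hα2 : α < 1 + 4 / ((d : ℝ) - 2))
    (hq : q = 2 * (α ^ 2 - 1) / (4 - (α - 1) * ((d : ℝ) - 2))) :
    0 < q ∧
    (d : ℝ) * (α - 1) * q / (2 * (α + 1))
      = (d : ℝ) * (α - 1) ^ 2 / (4 - (α - 1) * ((d : ℝ) - 2)) ∧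
    (d : ℝ) * (α - 1) ^ 2 / (4 - (α - 1) * ((d : ℝ) - 2)) > 1 := by
  have hd3 : (3 : ℝ) ≤ (d : ℝ) := by exact_mod_cast hd
  set s := Real.sqrt ((d : ℝ) ^ 2 + 12 * (d : ℝ) + 4) with hsdef
  have hs2 : s ^ 2 = (d : ℝ) ^ 2 + 12 * (d : ℝ) + 4 :=
    Real.sq_sqrt (by nlinarith)
  have hspos : 0 ≤ s := Real.sqrt_nonneg _
  have hsgt : (d : ℝ) - 2 < s := by nlinarith
  have ha0 : 0 < a := by
    rw [ha]
    apply div_pos (by linarith) (by linarith)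
  have hα : 1 < α := by linarith
  have hD : 0 < 4 - (α - 1) * ((d : ℝ) - 2) := by
    have h2 : 0 < (d : ℝ) - 2 := by linarith
    have := (lt_div_iff₀ h2).mp (by linarith : α - 1 < 4 / ((d : ℝ) - 2))
    linarith
  have hkey : (d : ℝ) * (α - 1) ^ 2 + ((d : ℝ) - 2) * (α - 1) - 4 > 0 := by
    have hb : 2 * (d : ℝ) * (α - 1) > 2 - (d : ℝ) + s := by
      have h2d : 0 < 2 * (d : ℝ) := by linarith
      have hb' : (2 - (d : ℝ) + s) / (2 * (d : ℝ)) < α - 1 := by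
        rw [ha] at hα1; linarith
      have := (div_lt_iff₀ h2d).mp hb'
      linarith
    nlinarith [sq_nonneg (2 * (d : ℝ) * (α - 1) + (d : ℝ) - 2 - s)]
  refine ⟨?_, ?_, ?_⟩
  · rw [hq]
    apply div_pos (by nlinarith) hD
  · rw [hq]
    field_simp
    ring
  · rw [gt_iff_lt, lt_div_iff₀ hD]
    nlinarith
end

section
/- Let d ≥ 3 be an integer, α(d) := (2 − d + √(d² + 12d + 4))/(2d), and let α be a real number with 1 + α(d) < α < 1 + 4/(d−2). Set q̃ := 2(α²−1)/(4 − (α−1)(d−2)). Then ∫₀¹ (1−t)^{q̃·(d(α−1)−4)/(2(α−1))} dt < ∞; that is, the function t ↦ (1−t)^{(d(α−1)−4)/(2(α−1))} belongs to L^{q̃}(0,1). -/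
/-- For `d ≥ 3`, Strauss exponent `α(d)`, and `1 + α(d) < α < 1 + 4/(d−2)`, with
`q̃ = 2(α²−1)/(4 − (α−1)(d−2))`, one has
`∫₀¹ (1−t)^{q̃(d(α−1)−4)/(2(α−1))} dt < ∞`, i.e.
`h^{1/(α−1)} ∈ L^{q̃}(0,1)` where `h(t) = (1−t)^{(d(α−1)−4)/2}`. -/
theorem stmt_7 (d : ℕ) (hd : 3 ≤ d) (a α q : ℝ)
    (ha : a = (2 - (d : ℝ) + Real.sqrt ((d : ℝ) ^ 2 + 12 * (d : ℝ) + 4)) / (2 * (d : ℝ)))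
    (hα1 : 1 + a < α) (hα2 : α < 1 + 4 / ((d : ℝ) - 2))
    (hq : q = 2 * (α ^ 2 - 1) / (4 - (α - 1) * ((d : ℝ) - 2))) :
    ∫⁻ t in Set.Ioo (0 : ℝ) 1,
      ENNReal.ofReal ((1 - t) ^ (q * ((d : ℝ) * (α - 1) - 4) / (2 * (α - 1)))) < ⊤ := by
  have hd3 : (3 : ℝ) ≤ (d : ℝ) := by exact_mod_cast hd
  have hd2 : (0 : ℝ) < (d : ℝ) - 2 := by linarith
  have hsd : (0:ℝ) ≤ (d : ℝ) ^ 2 + 12 * (d : ℝ) + 4 := by nlinarith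
  set s := Real.sqrt ((d : ℝ) ^ 2 + 12 * (d : ℝ) + 4) with hs
  have hs2 : s ^ 2 = (d : ℝ) ^ 2 + 12 * (d : ℝ) + 4 := Real.sq_sqrt hsd
  have hs0 : 0 ≤ s := Real.sqrt_nonneg _
  have ha0 : 0 < a := by
    rw [ha]
    apply div_pos _ (by linarith)
    nlinarith
  have hβ : a < α - 1 := by linarith
  have hβ0 : 0 < α - 1 := lt_trans ha0 hβ
  have hden : 0 < 4 - (α - 1) * ((d : ℝ) - 2) := by
    have h1 : α - 1 < 4 / ((d : ℝ) - 2) := by linarith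
    have h2 := (lt_div_iff₀ hd2).mp h1
    linarith
  have hkey : 0 < (d : ℝ) * (α - 1) ^ 2 + ((d : ℝ) - 2) * (α - 1) - 4 := by
    have haq : (d : ℝ) * a ^ 2 + ((d : ℝ) - 2) * a - 4 = 0 := by
      rw [ha]
      field_simp
      nlinarith [hs2]
    nlinarith [haq, mul_pos (sub_pos.mpr hβ)
      (show 0 < (d : ℝ) * ((α - 1) + a) + ((d : ℝ) - 2) by nlinarith)]
  set p : ℝ := q * ((d : ℝ) * (α - 1) - 4) / (2 * (α - 1)) with hp'
  have hpeq : p = ((d : ℝ) * (α - 1) ^ 2 + ((d : ℝ) - 2) * (α - 1) - 4) /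
      (4 - (α - 1) * ((d : ℝ) - 2)) - 1 := by
    rw [hp', hq]
    field_simp
    ring
  have hp : -1 < p := by
    rw [hpeq]
    have := div_pos hkey hden
    linarith
  have hii : IntervalIntegrable (fun x : ℝ => x ^ p) MeasureTheory.volume 0 1 :=
    intervalIntegral.intervalIntegrable_rpow' hp
  have hii2 : IntervalIntegrable (fun t : ℝ => (1 - t) ^ p) MeasureTheory.volume 0 1 := by
    have := hii.comp_sub_left 1
    exact (by simpa using this : IntervalIntegrable (fun t : ℝ => (1 - t) ^ p) MeasureTheory.volume 1 0).symm
  have hint : MeasureTheory.IntegrableOn (fun t : ℝ => (1 - t) ^ p)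
      (Set.Ioo (0 : ℝ) 1) MeasureTheory.volume := by
    have h1 : MeasureTheory.IntegrableOn (fun t : ℝ => (1 - t) ^ p)
        (Set.uIoc (0 : ℝ) 1) MeasureTheory.volume := hii2.def'
    exact h1.mono_set (by rw [Set.uIoc_of_le (by norm_num : (0:ℝ) ≤ 1)]; exact Set.Ioo_subset_Ioc_self)
  exact hint.lintegral_lt_top
end

section
/- Let d ≥ 3 be an integer, α(d) := (2 − d + √(d² + 12d + 4))/(2d), and let α be a real number with 1 + α(d) < α < 1 + 4/(d−2). Set q̃ := 2(α²−1)/(4 − (α−1)(d−2)). Then for every real C ≥ 0 and every measurable function w : [0, 1] → [0, ∞] satisfying w(t) ≤ C for all t ∈ [0, 1], one has ∫₀^∞ (1+s)^{−d(α−1)q̃/(2(α+1))} · w(s/(1+s))^{q̃} ds < ∞. -/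
/-!
The decay exponent `p = d(α-1)q̃/(2(α+1))` equals `d(α-1)²/(4-(α-1)(d-2))`, and `p > 1` says that
`x = α - 1` lies beyond the positive root of `d x² + (d-2) x - 4`, which is exactly the Strauss
exponent `α(d)`. With `p > 1` the weight `(1+s)^{-p}` is integrable on `(0, ∞)`, and since
`s/(1+s) ∈ [0, 1]` the factor `w(s/(1+s))^{q̃}` is bounded by `C^{q̃}`.
-/

open MeasureTheory Set

noncomputable def straussExponent (d : ℝ) : ℝ :=
  (2 - d + Real.sqrt (d ^ 2 + 12 * d + 4)) / (2 * d)

section StraussExponent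

variable {d : ℝ}

lemma straussExponent_pos (hd : 0 < d) : 0 < straussExponent d := by
  have hsq : (d - 2) ^ 2 < d ^ 2 + 12 * d + 4 := by nlinarith
  have hroot : d - 2 < Real.sqrt (d ^ 2 + 12 * d + 4) :=
    lt_of_abs_lt (Real.lt_sqrt_of_sq_lt (by simpa [sq_abs] using hsq))
  exact div_pos (by linarith) (by linarith)

lemma straussExponent_isRoot (hd : 0 < d) :
    d * straussExponent d ^ 2 + (d - 2) * straussExponent d = 4 := by
  unfold straussExponent
  set S := Real.sqrt (d ^ 2 + 12 * d + 4)
  have hS : S ^ 2 = d ^ 2 + 12 * d + 4 := Real.sq_sqrt (by positivity)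
  field_simp
  linear_combination hS

lemma lt_mul_sq_of_straussExponent_lt (hd : 2 < d) {x : ℝ} (hx : straussExponent d < x) :
    4 - x * (d - 2) < d * x ^ 2 := by
  have ha := straussExponent_pos (d := d) (by linarith)
  nlinarith [straussExponent_isRoot (d := d) (by linarith),
    mul_pos (mul_pos (by linarith : (0 : ℝ) < d) (sub_pos.2 hx)) ha]

end StraussExponent

section DecayExponent

variable {d α : ℝ}

lemma sub_mul_lt_four (hd : 2 < d) (hα : α < 1 + 4 / (d - 2)) : (α - 1) * (d - 2) < 4 := by
  have := (lt_div_iff₀ (by linarith : (0 : ℝ) < d - 2)).1 (by linarith : α - 1 < 4 / (d - 2))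
  linarith

lemma decay_exponent_eq (hα : α + 1 ≠ 0) (hD : 4 - (α - 1) * (d - 2) ≠ 0) :
    d * (α - 1) * (2 * (α ^ 2 - 1) / (4 - (α - 1) * (d - 2))) / (2 * (α + 1))
      = d * (α - 1) ^ 2 / (4 - (α - 1) * (d - 2)) := by
  field_simp
  ring

lemma one_lt_decay_exponent (hd : 2 < d) (hα1 : 1 + straussExponent d < α)
    (hα2 : α < 1 + 4 / (d - 2)) :
    1 < d * (α - 1) * (2 * (α ^ 2 - 1) / (4 - (α - 1) * (d - 2))) / (2 * (α + 1)) := by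
  have hD : 0 < 4 - (α - 1) * (d - 2) := by linarith [sub_mul_lt_four hd hα2]
  have hα : 1 < α := by linarith [straussExponent_pos (d := d) (by linarith)]
  rw [decay_exponent_eq (by linarith) hD.ne', one_lt_div hD]
  exact lt_mul_sq_of_straussExponent_lt hd (by linarith)

end DecayExponent

lemma lintegral_Ioi_one_add_rpow_neg_lt_top {p : ℝ} (hp : 1 < p) :
    ∫⁻ s in Ioi (0 : ℝ), ENNReal.ofReal ((1 + s) ^ (-p)) < ⊤ := by
  have hint : IntegrableOn (fun s : ℝ ↦ (1 + ‖s‖) ^ (-p)) (Ioi 0) :=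
    (integrable_one_add_norm (by simpa using hp)).integrableOn
  refine lt_of_eq_of_lt (setLIntegral_congr_fun measurableSet_Ioi fun s hs ↦ ?_)
    hint.setLIntegral_lt_top
  rw [Real.norm_of_nonneg (le_of_lt hs)]

lemma setLIntegral_mul_rpow_lt_top_of_le {X : Type*} [MeasurableSpace X] {μ : Measure X}
    {s : Set X} (hs : MeasurableSet s) {f g : X → ENNReal} {c : ENNReal} {q : ℝ}
    (hf : ∫⁻ x in s, f x ∂μ < ⊤) (hg : ∀ x ∈ s, g x ≤ c) (hc : c ≠ ⊤) (hq : 0 ≤ q) :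
    ∫⁻ x in s, f x * g x ^ q ∂μ < ⊤ := by
  calc ∫⁻ x in s, f x * g x ^ q ∂μ ≤ ∫⁻ x in s, f x * c ^ q ∂μ :=
        setLIntegral_mono' hs fun x hx ↦ by gcongr; exact hg x hx
    _ = (∫⁻ x in s, f x ∂μ) * c ^ q := lintegral_mul_const' _ _ (ENNReal.rpow_ne_top_of_nonneg hq hc)
    _ < ⊤ := ENNReal.mul_lt_top hf (ENNReal.rpow_lt_top_of_nonneg hq hc)

lemma div_one_add_mem_Icc {s : ℝ} (hs : 0 < s) : s / (1 + s) ∈ Icc (0 : ℝ) 1 :=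
  ⟨by positivity, (div_le_one (by linarith)).2 (by linarith)⟩

theorem stmt_14_general (d : ℕ) (hd : 3 ≤ d) (a α q : ℝ)
    (ha : a = (2 - (d : ℝ) + Real.sqrt ((d : ℝ) ^ 2 + 12 * (d : ℝ) + 4)) / (2 * (d : ℝ)))
    (hα1 : 1 + a < α) (hα2 : α < 1 + 4 / ((d : ℝ) - 2))
    (hq : q = 2 * (α ^ 2 - 1) / (4 - (α - 1) * ((d : ℝ) - 2)))
    (C : ℝ) (w : ℝ → ENNReal)
    (hwb : ∀ t ∈ Set.Icc (0 : ℝ) 1, w t ≤ ENNReal.ofReal C) :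
    ∫⁻ s in Set.Ioi (0 : ℝ),
        ENNReal.ofReal ((1 + s) ^ (-((d : ℝ) * (α - 1) * q / (2 * (α + 1)))))
          * (w (s / (1 + s))) ^ q < ⊤ := by
  have hd2 : (2 : ℝ) < d := by exact_mod_cast hd
  have hstrauss : 1 + straussExponent d < α := by rwa [ha] at hα1
  have hq0 : 0 ≤ q := by
    have hα : 1 < α := by linarith [straussExponent_pos (d := d) (by linarith)]
    rw [hq]
    exact div_nonneg (by nlinarith) (by linarith [sub_mul_lt_four hd2 hα2])
  subst hq
  exact setLIntegral_mul_rpow_lt_top_of_le measurableSet_Ioi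
    (lintegral_Ioi_one_add_rpow_neg_lt_top (one_lt_decay_exponent hd2 hstrauss hα2))
    (fun s hs ↦ hwb _ (div_one_add_mem_Icc hs)) ENNReal.ofReal_ne_top hq0

/-- For `d ≥ 3`, Strauss exponent `α(d)`, `1 + α(d) < α < 1 + 4/(d−2)` and
`q̃ = 2(α²−1)/(4 − (α−1)(d−2))`: for every `C ≥ 0` and every measurable
`w : [0,1] → [0,∞]` with `w ≤ C` on `[0,1]`, one has
`∫₀^∞ (1+s)^{−d(α−1)q̃/(2(α+1))} w(s/(1+s))^{q̃} ds < ∞`. -/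
theorem stmt_14 (d : ℕ) (hd : 3 ≤ d) (a α q : ℝ)
    (ha : a = (2 - (d : ℝ) + Real.sqrt ((d : ℝ) ^ 2 + 12 * (d : ℝ) + 4)) / (2 * (d : ℝ)))
    (hα1 : 1 + a < α) (hα2 : α < 1 + 4 / ((d : ℝ) - 2))
    (hq : q = 2 * (α ^ 2 - 1) / (4 - (α - 1) * ((d : ℝ) - 2)))
    (C : ℝ) (hC : 0 ≤ C) (w : ℝ → ENNReal) (hw : Measurable w)
    (hwb : ∀ t ∈ Set.Icc (0 : ℝ) 1, w t ≤ ENNReal.ofReal C) :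
    ∫⁻ s in Set.Ioi (0 : ℝ),
        ENNReal.ofReal ((1 + s) ^ (-((d : ℝ) * (α - 1) * q / (2 * (α + 1)))))
          * (w (s / (1 + s))) ^ q < ⊤ :=
  stmt_14_general d hd a α q ha hα1 hα2 hq C w hwb
end
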